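/- arXiv:2512.01655 — 7 statements merged into one kernel-verified Lean document; each statement's English description precedes it below -/
import Mathlib

section
/- Let r > 0 and σ > 0, let (ρ_n)_{n∈ℕ} be a sequence of nonnegative measurable functions on ℝ² such that ∫_{B_r(0)} ρ_n dx > σ for every n, and let (u_n)_{n∈ℕ} be a sequence of real-valued measurable functions on ℝ² such that sup_n ∫_{ℝ²} u_n² dx < ∞ and sup_n ∬_{ℝ²×ℝ²} log(1+|x−y|) ρ_n(x) u_n(y)² dx dy < ∞. Then sup_n ∫_{ℝ²} log(1+|x|) u_n(x)² dx < ∞. -/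
/-!
For `x ∈ B_r(0)` the triangle inequality gives
`log (1 + |y|) ≤ log (1 + |x - y|) + log (1 + r)`. Integrating this against
`ρ_n(x) u_n(y)² dx dy` over `B_r(0) × ℝ²` and dividing by the mass of `ρ_n` on the ball, which
exceeds `σ`, bounds `∫ log (1 + |y|) u_n(y)² dy` by `B / σ + log (1 + r) · L`, where `B` and `L`
are the two uniform bounds of the hypotheses. To divide, that mass has to be finite, so `ρ_n` is
first truncated at a large height.
-/

open MeasureTheory Metric Real

noncomputable section

abbrev Plane := EuclideanSpace ℝ (Fin 2)

lemma log_one_add_norm_le {E : Type*} [SeminormedAddGroup E] (x y : E) :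
    log (1 + ‖y‖) ≤ log (1 + ‖x - y‖) + log (1 + ‖x‖) := by
  have hy : ‖y‖ ≤ ‖x‖ + ‖x - y‖ := norm_le_norm_add_norm_sub x y
  rw [← log_mul (by positivity) (by positivity)]
  gcongr
  nlinarith [norm_nonneg x, norm_nonneg (x - y)]

section Weighted

variable {X : Type*} [MeasurableSpace X] {μ : Measure X}

lemma exists_lt_setLIntegral_min_natCast {s : Set X} {g : X → ENNReal} (hg : Measurable g)
    {σ : ENNReal} (hσ : σ < ∫⁻ x in s, g x ∂μ) :
    ∃ M : ℕ, σ < ∫⁻ x in s, min (g x) M ∂μ := by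
  have hsup : ∫⁻ x in s, g x ∂μ = ⨆ M : ℕ, ∫⁻ x in s, min (g x) M ∂μ := by
    rw [← lintegral_iSup (fun M => hg.min measurable_const)
      (fun _ _ hMN x => min_le_min le_rfl (Nat.cast_le.2 hMN))]
    simp only [← inf_iSup_eq, ENNReal.iSup_natCast, inf_top_eq]
  exact lt_iSup_iff.1 (hsup ▸ hσ)

lemma setLIntegral_mul_lintegral_le {s : Set X} (hs : MeasurableSet s) {w f φ : X → ENNReal}
    {K : X → X → ENNReal} {C : ENNReal} (hw : Measurable w) (hf : Measurable f)
    (hφ : ∀ x ∈ s, ∀ y, φ y ≤ K x y + C) :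
    (∫⁻ x in s, w x ∂μ) * ∫⁻ y, φ y * f y ∂μ ≤
      ∫⁻ x in s, ∫⁻ y, w x * K x y * f y ∂μ ∂μ +
        (∫⁻ x in s, w x ∂μ) * C * ∫⁻ y, f y ∂μ := by
  calc (∫⁻ x in s, w x ∂μ) * ∫⁻ y, φ y * f y ∂μ
      = ∫⁻ x in s, w x * ∫⁻ y, φ y * f y ∂μ ∂μ := (lintegral_mul_const _ hw).symm
    _ ≤ ∫⁻ x in s, ∫⁻ y, (w x * K x y * f y + w x * C * f y) ∂μ ∂μ := by
        refine setLIntegral_mono' hs fun x hx => (lintegral_const_mul_le _ _).trans ?_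
        refine lintegral_mono fun y => ?_
        calc w x * (φ y * f y) ≤ w x * ((K x y + C) * f y) := by gcongr; exact hφ x hx y
          _ = w x * K x y * f y + w x * C * f y := by ring
    _ = ∫⁻ x in s, (∫⁻ y, w x * K x y * f y ∂μ + w x * C * ∫⁻ y, f y ∂μ) ∂μ := by
        congr! 2 with x
        rw [lintegral_add_right _ (hf.const_mul _), lintegral_const_mul _ hf]
    _ = _ := by
        rw [lintegral_add_right _ ((hw.mul_const _).mul_const _), lintegral_mul_const _
          (hw.mul_const _), lintegral_mul_const _ hw]

end Weighted

lemma ENNReal.le_div_add_of_mul_le_add_mul {σ W T A B : ENNReal} (hσ : σ ≠ 0) (hσW : σ ≤ W)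
    (hW : W ≠ ⊤) (h : W * T ≤ A + W * B) : T ≤ A / σ + B := by
  have hW₀ : W ≠ 0 := (pos_iff_ne_zero.2 hσ).trans_le hσW |>.ne'
  calc T ≤ (A + W * B) / W := by
        rw [ENNReal.le_div_iff_mul_le (.inl hW₀) (.inl hW), mul_comm]
        exact h
    _ = A / W + B := by rw [ENNReal.add_div, mul_comm, ENNReal.mul_div_cancel_right hW₀ hW]
    _ ≤ A / σ + B := by gcongr

lemma lintegral_log_one_add_norm_mul_le {E : Type*} [SeminormedAddCommGroup E]
    [MeasurableSpace E] [OpensMeasurableSpace E] {μ : Measure E} {r : ℝ}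
    (hμ : μ (ball 0 r) ≠ ⊤) {σ : ENNReal} (hσ : σ ≠ 0) {ρ f : E → ENNReal} (hρ : Measurable ρ)
    (hf : Measurable f) (hρσ : σ < ∫⁻ x in ball 0 r, ρ x ∂μ) :
    ∫⁻ y, ENNReal.ofReal (log (1 + ‖y‖)) * f y ∂μ ≤
      (∫⁻ x, ∫⁻ y, ρ x * ENNReal.ofReal (log (1 + ‖x - y‖)) * f y ∂μ ∂μ) / σ +
        ENNReal.ofReal (log (1 + r)) * ∫⁻ y, f y ∂μ := by
  obtain ⟨M, hM⟩ := exists_lt_setLIntegral_min_natCast hρ hρσ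
  have hfinite : ∫⁻ x in ball 0 r, min (ρ x) M ∂μ ≠ ⊤ := by
    refine ne_top_of_le_ne_top ?_
      (setLIntegral_mono' measurableSet_ball fun x _ => min_le_right _ _)
    rw [setLIntegral_const]
    exact ENNReal.mul_ne_top (ENNReal.natCast_ne_top M) hμ
  refine ENNReal.le_div_add_of_mul_le_add_mul hσ hM.le hfinite ?_
  have hlog : ∀ x ∈ ball (0 : E) r, ∀ y, ENNReal.ofReal (log (1 + ‖y‖)) ≤
      ENNReal.ofReal (log (1 + ‖x - y‖)) + ENNReal.ofReal (log (1 + r)) := by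
    intro x hx y
    have hxr : log (1 + ‖x‖) ≤ log (1 + r) := by
      rw [mem_ball_zero_iff] at hx
      gcongr
    rw [← ENNReal.ofReal_add (log_nonneg (by simp)) ((log_nonneg (by simp)).trans hxr)]
    exact ENNReal.ofReal_le_ofReal ((log_one_add_norm_le x y).trans (by gcongr))
  refine (setLIntegral_mul_lintegral_le measurableSet_ball (hρ.min measurable_const) hf
    hlog).trans ?_
  rw [mul_assoc]
  gcongr with x y
  · exact Measure.restrict_le_self
  · exact min_le_left _ _

theorem stmt0_general (r σ : ℝ) (hσ : 0 < σ)
    (ρ : ℕ → Plane → ℝ) (hρmeas : ∀ n, Measurable (ρ n))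
    (hρball : ∀ n, ENNReal.ofReal σ <
      ∫⁻ x in Metric.ball (0 : Plane) r, ENNReal.ofReal (ρ n x))
    (u : ℕ → Plane → ℝ) (humeas : ∀ n, Measurable (u n))
    (hL2 : (⨆ n, ∫⁻ x, ENNReal.ofReal ((u n x) ^ 2)) < ⊤)
    (hB1 : (⨆ n, ∫⁻ x, ∫⁻ y,
      ENNReal.ofReal (Real.log (1 + ‖x - y‖) * ρ n x * (u n y) ^ 2)) < ⊤) :
    (⨆ n, ∫⁻ x, ENNReal.ofReal (Real.log (1 + ‖x‖) * (u n x) ^ 2)) < ⊤ := by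
  have hσ₀ : ENNReal.ofReal σ ≠ 0 := by simpa using hσ
  have hbound : ∀ n, ∫⁻ x, ENNReal.ofReal (log (1 + ‖x‖) * (u n x) ^ 2) ≤
      (⨆ n, ∫⁻ x, ∫⁻ y, ENNReal.ofReal (log (1 + ‖x - y‖) * ρ n x * (u n y) ^ 2)) /
        ENNReal.ofReal σ + ENNReal.ofReal (log (1 + r)) *
          ⨆ n, ∫⁻ x, ENNReal.ofReal ((u n x) ^ 2) := fun n => by
    have hkernel : ∀ x y, ENNReal.ofReal (ρ n x) * ENNReal.ofReal (log (1 + ‖x - y‖)) *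
        ENNReal.ofReal (u n y ^ 2) =
          ENNReal.ofReal (log (1 + ‖x - y‖) * ρ n x * u n y ^ 2) := by
      intro x y
      rw [ENNReal.ofReal_mul' (sq_nonneg _), ENNReal.ofReal_mul (log_nonneg (by simp)),
        mul_comm (ENNReal.ofReal (ρ n x))]
    have key := lintegral_log_one_add_norm_mul_le measure_ball_lt_top.ne hσ₀
      (hρmeas n).ennreal_ofReal ((humeas n).pow_const 2).ennreal_ofReal (hρball n)
    simp only [hkernel] at key
    rw [lintegral_congr fun x => ENNReal.ofReal_mul (log_nonneg (by simp))]
    refine key.trans ?_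
    gcongr
    · exact le_iSup (fun n => ∫⁻ x, ∫⁻ y,
        ENNReal.ofReal (log (1 + ‖x - y‖) * ρ n x * (u n y) ^ 2)) n
    · exact le_iSup (fun n => ∫⁻ x, ENNReal.ofReal ((u n x) ^ 2)) n
  refine (iSup_le hbound).trans_lt ?_
  exact ENNReal.add_lt_top.2 ⟨ENNReal.div_lt_top hB1.ne hσ₀,
    ENNReal.mul_lt_top ENNReal.ofReal_lt_top hL2⟩

/-- If `ρ n` are nonnegative measurable functions whose integrals over `B_r(0)` exceed `σ > 0`,
and `u n` are measurable with uniformly bounded `L²` norms and uniformly bounded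
`∬ log(1+|x-y|) ρ_n(x) u_n(y)² dx dy`, then `∫ log(1+|x|) u_n(x)² dx` is uniformly bounded. -/
theorem stmt0 (r σ : ℝ) (hr : 0 < r) (hσ : 0 < σ)
    (ρ : ℕ → Plane → ℝ) (hρmeas : ∀ n, Measurable (ρ n)) (hρnonneg : ∀ n x, 0 ≤ ρ n x)
    (hρball : ∀ n, ENNReal.ofReal σ <
      ∫⁻ x in Metric.ball (0 : Plane) r, ENNReal.ofReal (ρ n x))
    (u : ℕ → Plane → ℝ) (humeas : ∀ n, Measurable (u n))
    (hL2 : (⨆ n, ∫⁻ x, ENNReal.ofReal ((u n x) ^ 2)) < ⊤)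
    (hB1 : (⨆ n, ∫⁻ x, ∫⁻ y,
      ENNReal.ofReal (Real.log (1 + ‖x - y‖) * ρ n x * (u n y) ^ 2)) < ⊤) :
    (⨆ n, ∫⁻ x, ENNReal.ofReal (Real.log (1 + ‖x‖) * (u n x) ^ 2)) < ⊤ :=
  stmt0_general r σ hσ ρ hρmeas hρball u humeas hL2 hB1
end
end

section
/- Let r > 0 and σ > 0, let (ρ_n)_{n∈ℕ} be a sequence of nonnegative measurable functions on ℝ² such that ∫_{B_r(0)} ρ_n dx > σ for every n, and let (u_n)_{n∈ℕ} be a sequence of real-valued measurable functions on ℝ². If ∬_{ℝ²×ℝ²} log(1+|x−y|) ρ_n(x) u_n(y)² dx dy → 0 and ∫_{ℝ²} u_n² dx → 0 as n → ∞, then ∫_{ℝ²} log(1+|x|) u_n(x)² dx → 0 as n → ∞. -/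
/-!
Split `ℝ²` into the ball `B_{2r}(0)` and its complement. On the ball `log (1 + |y|) ≤ log (1 + 2r)`,
so that part is controlled by `∫ u_n²`. Off the ball, every `x ∈ B_r(0)` satisfies
`1 + |y| ≤ (1 + |x - y|)²`, so `log (1 + |y|) ≤ 2 log (1 + |x - y|)`; averaging this against the mass
`> σ` that `ρ_n` puts on `B_r(0)` bounds the outer part by `2/σ` times the double integral.
-/

open MeasureTheory

noncomputable section

open Metric ENNReal

theorem log_one_add_norm_le_two_mul_log_one_add_norm_sub {E : Type*} [SeminormedAddCommGroup E]
    {x y : E} {r : ℝ} (hx : ‖x‖ ≤ r) (hy : 2 * r ≤ ‖y‖) :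
    Real.log (1 + ‖y‖) ≤ 2 * Real.log (1 + ‖x - y‖) := by
  have hxy : ‖y‖ - ‖x‖ ≤ ‖x - y‖ := by simpa [norm_sub_rev] using norm_sub_norm_le y x
  calc Real.log (1 + ‖y‖) ≤ Real.log ((1 + ‖x - y‖) ^ 2) :=
        Real.log_le_log (by positivity) (by nlinarith [norm_nonneg (x - y)])
    _ = 2 * Real.log (1 + ‖x - y‖) := by rw [Real.log_pow]; norm_num

section LogWeight

variable {E : Type*} [NormedAddCommGroup E] [MeasurableSpace E] [OpensMeasurableSpace E]
  {μ ν : Measure E} {g : E → ℝ}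

theorem setLIntegral_ball_log_one_add_norm_mul_le (hg : ∀ y, 0 ≤ g y) (R : ℝ) :
    ∫⁻ y in ball 0 R, ENNReal.ofReal (Real.log (1 + ‖y‖) * g y) ∂ν ≤
      ENNReal.ofReal (Real.log (1 + R)) * ∫⁻ y, ENNReal.ofReal (g y) ∂ν := by
  calc ∫⁻ y in ball 0 R, ENNReal.ofReal (Real.log (1 + ‖y‖) * g y) ∂ν
      ≤ ∫⁻ y in ball 0 R, ENNReal.ofReal (Real.log (1 + R)) * ENNReal.ofReal (g y) ∂ν := by
        refine setLIntegral_mono' measurableSet_ball fun y hy => ?_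
        rw [← ofReal_mul' (hg y)]
        have hyR : ‖y‖ ≤ R := (mem_ball_zero_iff.mp hy).le
        gcongr
        exact hg y
    _ = ENNReal.ofReal (Real.log (1 + R)) * ∫⁻ y in ball 0 R, ENNReal.ofReal (g y) ∂ν :=
        lintegral_const_mul' _ _ ofReal_ne_top
    _ ≤ _ := by gcongr; exact Measure.restrict_le_self

theorem setLIntegral_compl_ball_log_one_add_norm_mul_le (hg : ∀ y, 0 ≤ g y) {r : ℝ} {x : E}
    (hx : ‖x‖ ≤ r) :
    ∫⁻ y in (ball 0 (2 * r))ᶜ, ENNReal.ofReal (Real.log (1 + ‖y‖) * g y) ∂ν ≤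
      2 * ∫⁻ y, ENNReal.ofReal (Real.log (1 + ‖x - y‖) * g y) ∂ν := by
  calc ∫⁻ y in (ball 0 (2 * r))ᶜ, ENNReal.ofReal (Real.log (1 + ‖y‖) * g y) ∂ν
      ≤ ∫⁻ y in (ball 0 (2 * r))ᶜ, 2 * ENNReal.ofReal (Real.log (1 + ‖x - y‖) * g y) ∂ν := by
        refine setLIntegral_mono' measurableSet_ball.compl fun y hy => ?_
        have hy' : 2 * r ≤ ‖y‖ := by simpa using hy
        calc ENNReal.ofReal (Real.log (1 + ‖y‖) * g y)
            ≤ ENNReal.ofReal (2 * Real.log (1 + ‖x - y‖) * g y) := by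
              gcongr
              · exact hg y
              · exact log_one_add_norm_le_two_mul_log_one_add_norm_sub hx hy'
          _ = 2 * ENNReal.ofReal (Real.log (1 + ‖x - y‖) * g y) := by
              rw [mul_assoc, ofReal_mul zero_le_two, ofReal_ofNat]
    _ = 2 * ∫⁻ y in (ball 0 (2 * r))ᶜ, ENNReal.ofReal (Real.log (1 + ‖x - y‖) * g y) ∂ν :=
        lintegral_const_mul' _ _ ofNat_ne_top
    _ ≤ _ := by gcongr; exact Measure.restrict_le_self

theorem setLIntegral_ball_mul_setLIntegral_compl_ball_le (hg : ∀ y, 0 ≤ g y) (r : ℝ)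
    (ρ : E → ℝ) :
    (∫⁻ x in ball 0 r, ENNReal.ofReal (ρ x) ∂μ) *
        ∫⁻ y in (ball 0 (2 * r))ᶜ, ENNReal.ofReal (Real.log (1 + ‖y‖) * g y) ∂ν ≤
      2 * ∫⁻ x, ∫⁻ y, ENNReal.ofReal (Real.log (1 + ‖x - y‖) * ρ x * g y) ∂ν ∂μ := by
  set A := ∫⁻ y in (ball 0 (2 * r))ᶜ, ENNReal.ofReal (Real.log (1 + ‖y‖) * g y) ∂ν
  calc (∫⁻ x in ball 0 r, ENNReal.ofReal (ρ x) ∂μ) * A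
      ≤ ∫⁻ x in ball 0 r, ENNReal.ofReal (ρ x) * A ∂μ := lintegral_mul_const_le _ _
    _ ≤ ∫⁻ x in ball 0 r,
          2 * ∫⁻ y, ENNReal.ofReal (Real.log (1 + ‖x - y‖) * ρ x * g y) ∂ν ∂μ := by
        refine setLIntegral_mono' measurableSet_ball fun x hx => ?_
        calc ENNReal.ofReal (ρ x) * A
            ≤ ENNReal.ofReal (ρ x) *
                (2 * ∫⁻ y, ENNReal.ofReal (Real.log (1 + ‖x - y‖) * g y) ∂ν) := by
              gcongr
              exact setLIntegral_compl_ball_log_one_add_norm_mul_le hg (mem_ball_zero_iff.mp hx).le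
          _ = 2 * ∫⁻ y, ENNReal.ofReal (ρ x) *
                ENNReal.ofReal (Real.log (1 + ‖x - y‖) * g y) ∂ν := by
              rw [lintegral_const_mul' _ _ ofReal_ne_top]; ring
          _ = 2 * ∫⁻ y, ENNReal.ofReal (Real.log (1 + ‖x - y‖) * ρ x * g y) ∂ν := by
              refine congrArg _ (lintegral_congr fun y => ?_)
              rw [← ofReal_mul' (mul_nonneg (Real.log_nonneg (by simp)) (hg y))]
              ring_nf
    _ = 2 * ∫⁻ x in ball 0 r,
          ∫⁻ y, ENNReal.ofReal (Real.log (1 + ‖x - y‖) * ρ x * g y) ∂ν ∂μ :=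
        lintegral_const_mul' _ _ ofNat_ne_top
    _ ≤ _ := by gcongr; exact Measure.restrict_le_self

theorem lintegral_log_one_add_norm_mul_le_s1 (hg : ∀ y, 0 ≤ g y) {r : ℝ} {ρ : E → ℝ}
    {c : ℝ≥0∞} (hc₀ : c ≠ 0) (hc : c ≠ ∞) (hρ : c ≤ ∫⁻ x in ball 0 r, ENNReal.ofReal (ρ x) ∂μ) :
    ∫⁻ y, ENNReal.ofReal (Real.log (1 + ‖y‖) * g y) ∂ν ≤
      ENNReal.ofReal (Real.log (1 + 2 * r)) * ∫⁻ y, ENNReal.ofReal (g y) ∂ν +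
        2 / c * ∫⁻ x, ∫⁻ y, ENNReal.ofReal (Real.log (1 + ‖x - y‖) * ρ x * g y) ∂ν ∂μ := by
  rw [← lintegral_add_compl _ (measurableSet_ball (x := 0) (ε := 2 * r))]
  gcongr
  · exact setLIntegral_ball_log_one_add_norm_mul_le hg _
  · rw [← ENNReal.mul_div_right_comm, ENNReal.le_div_iff_mul_le (.inl hc₀) (.inl hc), mul_comm]
    exact (mul_le_mul_left hρ _).trans (setLIntegral_ball_mul_setLIntegral_compl_ball_le hg r ρ)

end LogWeight

theorem stmt1_general (r σ : ℝ) (hσ : 0 < σ)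
    (ρ : ℕ → Plane → ℝ)
    (hρball : ∀ n, ENNReal.ofReal σ <
      ∫⁻ x in Metric.ball (0 : Plane) r, ENNReal.ofReal (ρ n x))
    (u : ℕ → Plane → ℝ)
    (hB1 : Filter.Tendsto (fun n => ∫⁻ x, ∫⁻ y,
      ENNReal.ofReal (Real.log (1 + ‖x - y‖) * ρ n x * (u n y) ^ 2)) Filter.atTop (nhds 0))
    (hL2 : Filter.Tendsto (fun n => ∫⁻ x, ENNReal.ofReal ((u n x) ^ 2))
      Filter.atTop (nhds 0)) :
    Filter.Tendsto (fun n => ∫⁻ x, ENNReal.ofReal (Real.log (1 + ‖x‖) * (u n x) ^ 2))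
      Filter.atTop (nhds 0) := by
  have hσ₀ : ENNReal.ofReal σ ≠ 0 := (ENNReal.ofReal_pos.mpr hσ).ne'
  have hbound := fun n => lintegral_log_one_add_norm_mul_le_s1 (ν := volume)
    (fun y => sq_nonneg (u n y)) hσ₀ ofReal_ne_top (hρball n).le
  refine tendsto_of_tendsto_of_tendsto_of_le_of_le tendsto_const_nhds ?_ (fun _ => zero_le)
    hbound
  simpa using (ENNReal.Tendsto.const_mul hL2 (.inr ofReal_ne_top)).add
    (ENNReal.Tendsto.const_mul hB1 (.inr (div_ne_top (ofNat_ne_top (n := 2)) hσ₀)))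

/-- If `ρ n` are nonnegative measurable functions whose integrals over `B_r(0)` exceed `σ > 0`,
`u n` are measurable, `∬ log(1+|x-y|) ρ_n(x) u_n(y)² dx dy → 0` and `∫ u_n² → 0`,
then `∫ log(1+|x|) u_n(x)² dx → 0`. -/
theorem stmt1 (r σ : ℝ) (hr : 0 < r) (hσ : 0 < σ)
    (ρ : ℕ → Plane → ℝ) (hρmeas : ∀ n, Measurable (ρ n)) (hρnonneg : ∀ n x, 0 ≤ ρ n x)
    (hρball : ∀ n, ENNReal.ofReal σ <
      ∫⁻ x in Metric.ball (0 : Plane) r, ENNReal.ofReal (ρ n x))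
    (u : ℕ → Plane → ℝ) (humeas : ∀ n, Measurable (u n))
    (hB1 : Filter.Tendsto (fun n => ∫⁻ x, ∫⁻ y,
      ENNReal.ofReal (Real.log (1 + ‖x - y‖) * ρ n x * (u n y) ^ 2)) Filter.atTop (nhds 0))
    (hL2 : Filter.Tendsto (fun n => ∫⁻ x, ENNReal.ofReal ((u n x) ^ 2))
      Filter.atTop (nhds 0)) :
    Filter.Tendsto (fun n => ∫⁻ x, ENNReal.ofReal (Real.log (1 + ‖x‖) * (u n x) ^ 2))
      Filter.atTop (nhds 0) :=
  stmt1_general r σ hσ ρ hρball u hB1 hL2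
end
end

section
/- Let r > 0 and σ > 0, let ρ : ℝ² → [0,∞) be measurable with ∫_{B_r(0)} ρ dx ≥ σ, and let u : ℝ² → ℝ be measurable. Then ∬_{ℝ²×ℝ²} log(1+|x−y|) ρ(x) u(y)² dx dy + (σ/2)·log(1+2r)·∫_{ℝ²} u(y)² dy ≥ (σ/2)·∫_{ℝ²} log(1+|y|) u(y)² dy, where all integrals are taken in [0,∞]. -/
/-! For `x` in the ball, `1 + ‖y‖ ≤ (1 + ‖x - y‖)(1 + ‖x‖)`, so taking logarithms gives
`log (1 + ‖y‖) ≤ log (1 + ‖x - y‖) + log (1 + 2r)`. Integrating this against `u(y)²` in `y` and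
then against `ρ(x)` over the ball, which has mass at least `σ ≥ σ / 2`, gives the claim. The
subtraction in `ℝ≥0∞` lets this run without any finiteness assumption on the integrals. -/

open MeasureTheory

noncomputable section

open scoped ENNReal

theorem Real.log_one_add_norm_le_add {E : Type*} [SeminormedAddCommGroup E] (x y : E) :
    Real.log (1 + ‖y‖) ≤ Real.log (1 + ‖x - y‖) + Real.log (1 + ‖x‖) := by
  have hy : ‖y‖ ≤ ‖x‖ + ‖x - y‖ := by simpa using norm_sub_le x (x - y)
  rw [← Real.log_mul (by positivity) (by positivity)]
  exact Real.log_le_log (by positivity)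
    (by nlinarith [norm_nonneg x, norm_nonneg (x - y)])

theorem MeasureTheory.mul_lintegral_le_of_forall_le_add
    {X Y : Type*} [MeasurableSpace X] [MeasurableSpace Y] {μ : Measure X} {ν : Measure Y}
    {w : X → ℝ≥0∞} {B : Set X} {F G : Y → ℝ≥0∞} {K : X → Y → ℝ≥0∞} {a : ℝ≥0∞}
    (hB : MeasurableSet B) (hG : Measurable G) (ha : a ≤ ∫⁻ x in B, w x ∂μ)
    (hK : ∀ x ∈ B, ∀ y, F y ≤ K x y + G y) :
    a * ∫⁻ y, F y ∂ν ≤ (∫⁻ x, w x * ∫⁻ y, K x y ∂ν ∂μ) + a * ∫⁻ y, G y ∂ν := by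
  set D := (∫⁻ y, F y ∂ν) - ∫⁻ y, G y ∂ν
  have hD : ∀ x ∈ B, D ≤ ∫⁻ y, K x y ∂ν := fun x hx => by
    rw [tsub_le_iff_right, ← lintegral_add_right _ hG]
    exact lintegral_mono (hK x hx)
  have hBD : a * D ≤ ∫⁻ x, w x * ∫⁻ y, K x y ∂ν ∂μ :=
    calc a * D ≤ (∫⁻ x in B, w x ∂μ) * D := mul_le_mul_left ha D
      _ ≤ ∫⁻ x in B, w x * D ∂μ := lintegral_mul_const_le D w
      _ ≤ ∫⁻ x in B, w x * ∫⁻ y, K x y ∂ν ∂μ :=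
        setLIntegral_mono' hB fun x hx => mul_le_mul_right (hD x hx) (w x)
      _ ≤ ∫⁻ x, w x * ∫⁻ y, K x y ∂ν ∂μ := setLIntegral_le_lintegral B _
  calc a * ∫⁻ y, F y ∂ν ≤ a * (D + ∫⁻ y, G y ∂ν) := mul_le_mul_right le_tsub_add a
    _ = a * D + a * ∫⁻ y, G y ∂ν := mul_add a D _
    _ ≤ _ := add_le_add_left hBD _

theorem stmt2_general (r σ : ℝ) (hσ : 0 < σ)
    (ρ : Plane → ℝ)
    (hρball : ENNReal.ofReal σ ≤
      ∫⁻ x in Metric.ball (0 : Plane) r, ENNReal.ofReal (ρ x))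
    (u : Plane → ℝ) (humeas : Measurable u) :
    ENNReal.ofReal (σ / 2) * ∫⁻ y, ENNReal.ofReal (Real.log (1 + ‖y‖) * (u y) ^ 2) ≤
      (∫⁻ x, ∫⁻ y, ENNReal.ofReal (Real.log (1 + ‖x - y‖) * ρ x * (u y) ^ 2)) +
        ENNReal.ofReal (σ / 2 * Real.log (1 + 2 * r)) *
          ∫⁻ y, ENNReal.ofReal ((u y) ^ 2) := by
  have hK : ∀ x ∈ Metric.ball (0 : Plane) r, ∀ y,
      ENNReal.ofReal (Real.log (1 + ‖y‖) * u y ^ 2) ≤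
        ENNReal.ofReal (Real.log (1 + ‖x - y‖) * u y ^ 2) +
          ENNReal.ofReal (Real.log (1 + 2 * r) * u y ^ 2) := fun x hx y => by
    have hxr : ‖x‖ < r := mem_ball_zero_iff.mp hx
    have hlog : Real.log (1 + ‖x‖) ≤ Real.log (1 + 2 * r) :=
      Real.log_le_log (by positivity) (by linarith [norm_nonneg x])
    refine (ENNReal.ofReal_le_ofReal ?_).trans ENNReal.ofReal_add_le
    nlinarith [Real.log_one_add_norm_le_add x y, sq_nonneg (u y)]
  refine (mul_lintegral_le_of_forall_le_add measurableSet_ball (by fun_prop)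
    ((ENNReal.ofReal_le_ofReal (by linarith)).trans hρball) hK).trans (add_le_add ?_ ?_)
  · refine lintegral_mono fun x => (lintegral_const_mul_le _ _).trans_eq <|
      lintegral_congr fun y => ?_
    rw [← ENNReal.ofReal_mul' (mul_nonneg (Real.log_nonneg (by simp)) (sq_nonneg _))]
    ring_nf
  · simp_rw [ENNReal.ofReal_mul' (sq_nonneg (u _)), ENNReal.ofReal_mul (half_pos hσ).le]
    rw [lintegral_const_mul' _ _ ENNReal.ofReal_ne_top, mul_assoc]

/-- Quantitative version: for `ρ ≥ 0` measurable with `∫_{B_r(0)} ρ ≥ σ` and `u` measurable,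
`∬ log(1+|x-y|) ρ(x) u(y)² + (σ/2)·log(1+2r)·∫ u² ≥ (σ/2)·∫ log(1+|y|) u(y)²`. -/
theorem stmt2 (r σ : ℝ) (hr : 0 < r) (hσ : 0 < σ)
    (ρ : Plane → ℝ) (hρmeas : Measurable ρ) (hρnonneg : ∀ x, 0 ≤ ρ x)
    (hρball : ENNReal.ofReal σ ≤
      ∫⁻ x in Metric.ball (0 : Plane) r, ENNReal.ofReal (ρ x))
    (u : Plane → ℝ) (humeas : Measurable u) :
    ENNReal.ofReal (σ / 2) * ∫⁻ y, ENNReal.ofReal (Real.log (1 + ‖y‖) * (u y) ^ 2) ≤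
      (∫⁻ x, ∫⁻ y, ENNReal.ofReal (Real.log (1 + ‖x - y‖) * ρ x * (u y) ^ 2)) +
        ENNReal.ofReal (σ / 2 * Real.log (1 + 2 * r)) *
          ∫⁻ y, ENNReal.ofReal ((u y) ^ 2) :=
  stmt2_general r σ hσ ρ hρball u humeas
end
end

section
/- Let a > 0 and b > 0, and let (ρ_n)_{n∈ℕ} and (τ_n)_{n∈ℕ} be sequences of nonnegative integrable functions on ℝ² with ∫_{ℝ²} ρ_n dx = a and ∫_{ℝ²} τ_n dx = b for all n. Suppose sup_n ∬_{ℝ²×ℝ²} log(1+|x−y|) ρ_n(x) τ_n(y) dx dy < ∞. Then for every ε > 0 there exists ξ > 0 such that for every r > ξ and every n ∈ ℕ one has sup_{x∈ℝ²} ∫_{B_r(x)} ρ_n(y) dy ≥ a − ε and sup_{x∈ℝ²} ∫_{B_r(x)} τ_n(y) dy ≥ b − ε. -/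
/-!
If the mass of `g` in every ball of radius `r` falls short of its total mass by at least `ε`,
then every `x` sees mass `ε` of `g` at distance `≥ r`, where the kernel `log (1 + ‖x - y‖)` is
at least `log (1 + r)`; integrating against `f` gives `log (1 + r) * ε * ∫ f ≤ ∬ log (1 + ‖x - y‖) f g`.
A uniform bound `C` on this energy therefore forces concentration on balls of any radius `r`
with `log (1 + r) * ε * min a b > C`; the case of `ρ` uses the symmetry of the kernel.
-/

open MeasureTheory

noncomputable section

open Metric Set Real
open scoped ENNReal

lemma exists_pos_forall_lt_log_one_add_mul (C : ℝ) {c : ℝ} (hc : 0 < c) :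
    ∃ ξ : ℝ, 0 < ξ ∧ ∀ r, ξ < r → C < log (1 + r) * c := by
  refine ⟨exp (C / c), exp_pos _, fun r hr => ?_⟩
  have : C / c < log (1 + r) := by
    rw [← log_exp (C / c)]
    exact log_lt_log (exp_pos _) (by linarith)
  rwa [div_lt_iff₀ hc] at this

lemma lt_setIntegral_compl_of_iSup_lt {α ι : Type*} [MeasurableSpace α] {μ : Measure α}
    {g : α → ℝ} (hg0 : ∀ x, 0 ≤ g x) (hg : Integrable g μ) {s : ι → Set α}
    (hs : ∀ i, MeasurableSet (s i)) {ε : ℝ} (h : ⨆ i, ∫ y in s i, g y ∂μ < ∫ y, g y ∂μ - ε)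
    (i : ι) : ε < ∫ y in (s i)ᶜ, g y ∂μ := by
  have hbdd : BddAbove (range fun i => ∫ y in s i, g y ∂μ) :=
    ⟨∫ y, g y ∂μ, by
      rintro _ ⟨i, rfl⟩
      exact setIntegral_le_integral hg (.of_forall hg0)⟩
  have := integral_add_compl (hs i) hg
  linarith [le_ciSup hbdd i]

variable {E : Type*} [NormedAddCommGroup E] [MeasurableSpace E]

def logEnergy (μ : Measure E) (f g : E → ℝ) : ℝ≥0∞ :=
  ∫⁻ x, ∫⁻ y, ENNReal.ofReal (log (1 + ‖x - y‖) * f x * g y) ∂μ ∂μ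

variable {μ : Measure E} {f g : E → ℝ}

lemma logEnergy_comm [MeasurableSub₂ E] [OpensMeasurableSpace E] [SFinite μ]
    (hf : AEMeasurable f μ) (hg : AEMeasurable g μ) :
    logEnergy μ f g = logEnergy μ g f := by
  have hlog : Measurable fun p : E × E => log (1 + ‖p.1 - p.2‖) := by fun_prop
  rw [logEnergy, lintegral_lintegral_swap
    ((hlog.aemeasurable.mul hf.comp_fst).mul hg.comp_snd).ennreal_ofReal]
  refine lintegral_congr fun x => lintegral_congr fun y => ?_
  rw [norm_sub_rev]
  ring_nf

lemma ofReal_log_mul_setLIntegral_compl_ball_le [OpensMeasurableSpace E] (G : E → ℝ≥0∞)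
    (x : E) {r : ℝ} (hr : 0 ≤ r) :
    ENNReal.ofReal (log (1 + r)) * ∫⁻ y in (ball x r)ᶜ, G y ∂μ ≤
      ∫⁻ y, ENNReal.ofReal (log (1 + ‖x - y‖)) * G y ∂μ := by
  rw [← lintegral_const_mul' _ _ ENNReal.ofReal_ne_top]
  refine (lintegral_mono_ae ?_).trans (setLIntegral_le_lintegral _ _)
  filter_upwards [ae_restrict_mem measurableSet_ball.compl] with y hy
  have hxy : r ≤ ‖x - y‖ := by simpa [dist_eq_norm'] using hy
  gcongr

lemma ofReal_log_mul_le_logEnergy [OpensMeasurableSpace E] (hf0 : ∀ x, 0 ≤ f x)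
    (hg0 : ∀ x, 0 ≤ g x) (hf : Integrable f μ) (hg : Integrable g μ) {r ε : ℝ} (hr : 0 ≤ r)
    (hε : 0 ≤ ε) (hfar : ∀ x, ε ≤ ∫ y in (ball x r)ᶜ, g y ∂μ) :
    ENNReal.ofReal (log (1 + r) * ε * ∫ x, f x ∂μ) ≤ logEnergy μ f g := by
  have hlog : ∀ t : ℝ, 0 ≤ t → 0 ≤ log (1 + t) := fun t ht => log_nonneg (by linarith)
  have hsplit : ∀ x y, ENNReal.ofReal (log (1 + ‖x - y‖) * f x * g y) =
      ENNReal.ofReal (f x) * (ENNReal.ofReal (log (1 + ‖x - y‖)) * ENNReal.ofReal (g y)) := by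
    intro x y
    rw [mul_right_comm, ENNReal.ofReal_mul (mul_nonneg (hlog _ (norm_nonneg _)) (hg0 y)),
      ENNReal.ofReal_mul (hlog _ (norm_nonneg _)), mul_comm]
  have hinner : ∀ x, ENNReal.ofReal (log (1 + r) * ε) ≤
      ∫⁻ y, ENNReal.ofReal (log (1 + ‖x - y‖)) * ENNReal.ofReal (g y) ∂μ := by
    intro x
    refine le_trans ?_ (ofReal_log_mul_setLIntegral_compl_ball_le _ x hr)
    rw [ENNReal.ofReal_mul (hlog r hr), ← ofReal_integral_eq_lintegral_ofReal hg.restrict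
      (.of_forall hg0)]
    gcongr
    exact hfar x
  calc ENNReal.ofReal (log (1 + r) * ε * ∫ x, f x ∂μ)
      = ENNReal.ofReal (log (1 + r) * ε) * ∫⁻ x, ENNReal.ofReal (f x) ∂μ := by
        rw [ENNReal.ofReal_mul (mul_nonneg (hlog r hr) hε),
          ofReal_integral_eq_lintegral_ofReal hf (.of_forall hf0)]
    _ ≤ logEnergy μ f g := by
        rw [← lintegral_const_mul' _ _ ENNReal.ofReal_ne_top, logEnergy]
        refine lintegral_mono fun x => ?_
        simp_rw [hsplit x, lintegral_const_mul' _ _ ENNReal.ofReal_ne_top]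
        rw [mul_comm]
        gcongr
        exact hinner x

lemma sub_le_iSup_setIntegral_ball [OpensMeasurableSpace E] (hf0 : ∀ x, 0 ≤ f x)
    (hg0 : ∀ x, 0 ≤ g x) (hf : Integrable f μ) (hg : Integrable g μ) {r ε : ℝ} (hr : 0 ≤ r)
    (hε : 0 ≤ ε) (hE : logEnergy μ f g < ENNReal.ofReal (log (1 + r) * ε * ∫ x, f x ∂μ)) :
    ∫ y, g y ∂μ - ε ≤ ⨆ x, ∫ y in ball x r, g y ∂μ := by
  by_contra! h
  have hfar x := (lt_setIntegral_compl_of_iSup_lt hg0 hg (fun _ => measurableSet_ball) h x).le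
  exact hE.not_ge (ofReal_log_mul_le_logEnergy hf0 hg0 hf hg hr hε hfar)

/-- Boundedness of `∬ log(1+|x-y|) ρ_n(x) τ_n(y)` implies concentration of mass of `ρ_n`
and `τ_n` on large balls, uniformly in `n`. -/
theorem stmt3 (a b : ℝ) (ha : 0 < a) (hb : 0 < b)
    (ρ τ : ℕ → Plane → ℝ)
    (hρnonneg : ∀ n x, 0 ≤ ρ n x) (hτnonneg : ∀ n x, 0 ≤ τ n x)
    (hρint : ∀ n, Integrable (ρ n)) (hτint : ∀ n, Integrable (τ n))
    (hρmass : ∀ n, ∫ x, ρ n x = a) (hτmass : ∀ n, ∫ x, τ n x = b)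
    (hB1 : (⨆ n, ∫⁻ x, ∫⁻ y,
      ENNReal.ofReal (Real.log (1 + ‖x - y‖) * ρ n x * τ n y)) < ⊤) :
    ∀ ε : ℝ, 0 < ε → ∃ ξ : ℝ, 0 < ξ ∧ ∀ r : ℝ, ξ < r → ∀ n : ℕ,
      a - ε ≤ (⨆ x : Plane, ∫ y in Metric.ball x r, ρ n y) ∧
      b - ε ≤ (⨆ x : Plane, ∫ y in Metric.ball x r, τ n y) := by
  intro ε hε
  set S := ⨆ n, logEnergy volume (ρ n) (τ n)
  obtain ⟨ξ, hξ, hlog⟩ :=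
    exists_pos_forall_lt_log_one_add_mul S.toReal (mul_pos hε (lt_min ha hb))
  refine ⟨ξ, hξ, fun r hr n => ?_⟩
  have hE : ∀ c, min a b ≤ c →
      logEnergy volume (ρ n) (τ n) < ENNReal.ofReal (log (1 + r) * ε * c) := by
    intro c hc
    have hlogr : 0 < log (1 + r) := log_pos (by linarith)
    have hlt : S.toReal < log (1 + r) * ε * c := by
      nlinarith [hlog r hr, mul_pos hlogr hε]
    calc logEnergy volume (ρ n) (τ n) ≤ S := le_iSup (fun n => logEnergy volume (ρ n) (τ n)) n
      _ = ENNReal.ofReal S.toReal := (ENNReal.ofReal_toReal hB1.ne).symm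
      _ < _ := (ENNReal.ofReal_lt_ofReal_iff (by linarith [ENNReal.toReal_nonneg (a := S)])).2 hlt
  constructor
  · rw [← hρmass n]
    refine sub_le_iSup_setIntegral_ball (hτnonneg n) (hρnonneg n) (hτint n) (hρint n)
      (hξ.trans hr).le hε.le ?_
    rw [logEnergy_comm (hτint n).aemeasurable (hρint n).aemeasurable, hτmass n]
    exact hE b (min_le_right a b)
  · rw [← hτmass n]
    refine sub_le_iSup_setIntegral_ball (hρnonneg n) (hτnonneg n) (hρint n) (hτint n)
      (hξ.trans hr).le hε.le ?_
    rw [hρmass n]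
    exact hE a (min_le_left a b)
end
end

section
/- Let A, B, C > 0 and q > 1, and define f, g : (0,∞) → ℝ by f(t) = A t − B/t − C t^q and g(t) = A t² + B − C q t^{q+1}. Then the following are equivalent: (a) there exist real numbers t⁺, t̄, t⁻ with 0 < t⁺ < t̄ < t⁻ such that f(t⁺) = f(t⁻) = 0, f′(t⁺) > 0, f′(t⁻) < 0, g(t) > 0 for all t ∈ (0, t̄), and g(t) < 0 for all t ∈ (t̄, ∞); (b) ((q−1)^{(q−1)/2} / (q+1)^{(q+1)/2}) · A^{(q+1)/2} / B^{(q−1)/2} > C/2. -/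
/-!
Write `s = t²` and `p = (q + 1) / 2`, so that `t f(t) = A s − B − C s^p`. The tangent line
(Bernoulli) inequality for the convex function `s ↦ s^p` at `s₀ = (q + 1) B / ((q − 1) A)` gives
`A s − B ≤ 2 R s^p`, with equality only at `s = s₀`, where `R` is the constant of (b).
At a zero of `f` one has `g(t) = (q − 1) A (s₀ − t²)`; so `f(t⁺) = 0 < f′(t⁺)` forces `t⁺² < s₀`,
whence `C t⁺^(q+1) = A t⁺² − B < 2 R t⁺^(q+1)`. Conversely, if `C < 2 R` then `t f(t)` is positive
at `t = √s₀` and negative at `√(B / A)` and at `(A / C)^(1/(q−1))`, which yields zeros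
`t⁺ < √s₀ < t⁻`. Finally `g(t) = t^(q+1) (A t^(1−q) + B t^(−1−q) − C q)` with a strictly
decreasing bracket, positive at `t⁺` and negative at `t⁻`, which vanishes at `t̄`.
-/

noncomputable section

open Real Set

/-- `2 * critConst A B q` is the maximum of `s ↦ (A s − B) / s ^ ((q + 1) / 2)` on `s > 0`,
attained at `s = critSq A B q`. -/
def critConst (A B q : ℝ) : ℝ :=
  (q - 1) ^ ((q - 1) / 2) / (q + 1) ^ ((q + 1) / 2) * (A ^ ((q + 1) / 2) / B ^ ((q - 1) / 2))

def critSq (A B q : ℝ) : ℝ := (q + 1) * B / ((q - 1) * A)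

lemma rpow_tangent_lt {p s₀ s : ℝ} (hp : 1 < p) (hs₀ : 0 < s₀) (hs : 0 ≤ s) (hne : s ≠ s₀) :
    s₀ ^ p * (1 + p * (s / s₀ - 1)) < s ^ p := by
  have bernoulli := one_add_mul_self_lt_rpow_one_add (s := s / s₀ - 1)
    (by linarith [div_nonneg hs hs₀.le])
    (by rwa [sub_ne_zero, ne_eq, div_eq_one_iff_eq hs₀.ne']) hp
  rw [add_sub_cancel, div_rpow hs hs₀.le] at bernoulli
  calc _ < s₀ ^ p * (s ^ p / s₀ ^ p) := mul_lt_mul_of_pos_left bernoulli (by positivity)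
    _ = s ^ p := by field_simp

lemma rpow_add_one_eq_sq_rpow {t : ℝ} (ht : 0 ≤ t) (q : ℝ) :
    t ^ (q + 1) = (t ^ 2) ^ ((q + 1) / 2) := by
  rw [← rpow_natCast_mul ht]; ring_nf

lemma rpow_add_one_eq_rpow_sub_one_mul_sq {t : ℝ} (ht : 0 < t) (q : ℝ) :
    t ^ (q + 1) = t ^ (q - 1) * t ^ 2 := by
  rw [← rpow_natCast, ← rpow_add ht]; norm_num; ring_nf

variable {A B C q : ℝ}

lemma critSq_pos (hA : 0 < A) (hB : 0 < B) (hq : 1 < q) : 0 < critSq A B q := by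
  unfold critSq
  have : 0 < q - 1 := by linarith
  positivity

lemma critConst_pos (hA : 0 < A) (hB : 0 < B) (hq : 1 < q) : 0 < critConst A B q := by
  unfold critConst
  have : 0 < q - 1 := by linarith
  positivity

lemma two_mul_critConst_mul_rpow_critSq (hA : 0 < A) (hB : 0 < B) (hq : 1 < q) :
    2 * critConst A B q * critSq A B q ^ ((q + 1) / 2) = A * critSq A B q - B := by
  have hq₁ : 0 < q - 1 := by linarith
  have split : ∀ x : ℝ, 0 < x → x ^ ((q + 1) / 2) = x ^ ((q - 1) / 2) * x := fun x hx => by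
    rw [← rpow_add_one hx.ne']; ring_nf
  unfold critConst critSq
  rw [div_rpow (by positivity) (by positivity), mul_rpow (by positivity) hB.le,
    mul_rpow hq₁.le hA.le, split _ (by linarith : (0:ℝ) < q + 1), split _ hA, split _ hB,
    split _ hq₁]
  field_simp
  ring

lemma sub_lt_two_mul_critConst_mul_rpow (hA : 0 < A) (hB : 0 < B) (hq : 1 < q) {s : ℝ}
    (hs : 0 ≤ s) (hne : s ≠ critSq A B q) :
    A * s - B < 2 * critConst A B q * s ^ ((q + 1) / 2) := by
  have hs₀ := critSq_pos hA hB hq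
  have tangent := rpow_tangent_lt (p := (q + 1) / 2) (by linarith) hs₀ hs hne
  calc A * s - B = 2 * critConst A B q * critSq A B q ^ ((q + 1) / 2) *
        (1 + (q + 1) / 2 * (s / critSq A B q - 1)) := by
        rw [two_mul_critConst_mul_rpow_critSq hA hB hq]
        unfold critSq
        have : q - 1 ≠ 0 := by linarith
        field_simp
        ring
    _ < 2 * critConst A B q * s ^ ((q + 1) / 2) := by
        rw [mul_assoc]
        exact mul_lt_mul_of_pos_left tangent (by linarith [critConst_pos hA hB hq])

lemma hasDerivAt_sub_div_sub_rpow {t : ℝ} (ht : 0 < t) :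
    HasDerivAt (fun t : ℝ => A * t - B / t - C * t ^ q)
      ((A * t ^ 2 + B - C * q * t ^ (q + 1)) / t ^ 2) t := by
  have h : HasDerivAt (fun t : ℝ => A * t - B * t⁻¹ - C * t ^ q)
      (A * 1 - B * -(t ^ 2)⁻¹ - C * (q * t ^ (q - 1))) t :=
    (((hasDerivAt_id t).const_mul A).sub ((hasDerivAt_inv ht.ne').const_mul B)).sub
      ((hasDerivAt_rpow_const (Or.inl ht.ne')).const_mul C)
  simp_rw [div_eq_mul_inv]
  convert h using 1
  rw [rpow_sub_one ht.ne', rpow_add_one ht.ne']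
  field_simp
  ring

lemma mul_sub_div_sub_rpow {t : ℝ} (ht : 0 < t) :
    t * (A * t - B / t - C * t ^ q) = A * t ^ 2 - B - C * t ^ (q + 1) := by
  rw [rpow_add_one ht.ne']
  field_simp

lemma sub_div_sub_rpow_eq_zero_iff {t : ℝ} (ht : 0 < t) :
    A * t - B / t - C * t ^ q = 0 ↔ A * t ^ 2 - B - C * t ^ (q + 1) = 0 := by
  rw [← mul_sub_div_sub_rpow ht, mul_eq_zero, or_iff_right ht.ne']

lemma add_sub_mul_rpow_eq_rpow_mul {t : ℝ} (ht : 0 < t) :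
    A * t ^ 2 + B - C * q * t ^ (q + 1)
      = t ^ (q + 1) * (A * t ^ (1 - q) + B * t ^ (-1 - q) - C * q) := by
  have h₁ : t ^ (q + 1) * t ^ (1 - q) = t ^ 2 := by
    rw [← rpow_add ht, show q + 1 + (1 - q) = 2 by ring, rpow_two]
  have h₂ : t ^ (q + 1) * t ^ (-1 - q) = 1 := by
    rw [← rpow_add ht, show q + 1 + (-1 - q) = 0 by ring, rpow_zero]
  linear_combination (-A) * h₁ + (-B) * h₂

lemma add_sub_mul_rpow_eq_of_eq_zero (hA : 0 < A) (hq : 1 < q) {t : ℝ}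
    (h : A * t ^ 2 - B - C * t ^ (q + 1) = 0) :
    A * t ^ 2 + B - C * q * t ^ (q + 1) = (q - 1) * A * (critSq A B q - t ^ 2) := by
  unfold critSq
  have : q - 1 ≠ 0 := by linarith
  field_simp
  linear_combination q * h

lemma lt_two_mul_critConst_of_eq_zero (hA : 0 < A) (hB : 0 < B) (hq : 1 < q) {t : ℝ}
    (ht : 0 < t) (hzero : A * t ^ 2 - B - C * t ^ (q + 1) = 0)
    (hg : 0 < A * t ^ 2 + B - C * q * t ^ (q + 1)) :
    C < 2 * critConst A B q := by
  rw [add_sub_mul_rpow_eq_of_eq_zero hA hq hzero] at hg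
  have hne : t ^ 2 ≠ critSq A B q := by
    intro h
    rw [h, sub_self, mul_zero] at hg
    exact hg.false
  have key := sub_lt_two_mul_critConst_mul_rpow hA hB hq (sq_nonneg t) hne
  rw [← rpow_add_one_eq_sq_rpow ht.le] at key
  exact lt_of_mul_lt_mul_right (by linarith) (rpow_nonneg ht.le (q + 1))

lemma continuous_sub_sub_rpow (hq : 0 ≤ q + 1) :
    Continuous fun t : ℝ => A * t ^ 2 - B - C * t ^ (q + 1) := by
  have := continuous_rpow_const hq
  fun_prop

lemma sqrt_div_lt_of_pos (hA : 0 < A) (hC : 0 ≤ C) {t : ℝ} (ht : 0 < t)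
    (h : 0 < A * t ^ 2 - B - C * t ^ (q + 1)) : √(B / A) < t := by
  rw [sqrt_lt' ht, div_lt_iff₀ hA]
  nlinarith [rpow_nonneg ht.le (q + 1)]

lemma lt_rpow_inv_of_pos (hB : 0 ≤ B) (hC : 0 < C) (hq : 1 < q) {t : ℝ} (ht : 0 < t)
    (h : 0 < A * t ^ 2 - B - C * t ^ (q + 1)) : t < (A / C) ^ (q - 1)⁻¹ := by
  have hA : 0 < A := by nlinarith [rpow_nonneg ht.le (q + 1)]
  rw [lt_rpow_inv_iff_of_pos ht.le (by positivity) (by linarith), lt_div_iff₀ hC]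
  rw [rpow_add_one_eq_rpow_sub_one_mul_sq ht] at h
  nlinarith [sq_pos_of_pos ht, rpow_nonneg ht.le (q - 1)]

lemma sub_sub_rpow_sqrt_critSq_pos (hA : 0 < A) (hB : 0 < B) (hq : 1 < q)
    (hCR : C < 2 * critConst A B q) :
    0 < A * √(critSq A B q) ^ 2 - B - C * √(critSq A B q) ^ (q + 1) := by
  have hs₀ := critSq_pos hA hB hq
  have hmax := two_mul_critConst_mul_rpow_critSq hA hB hq
  have hgap := mul_pos (sub_pos.2 hCR) (rpow_pos_of_pos hs₀ ((q + 1) / 2))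
  rw [rpow_add_one_eq_sq_rpow (sqrt_nonneg _), sq_sqrt hs₀.le]
  linarith [sub_mul (2 * critConst A B q) C (critSq A B q ^ ((q + 1) / 2))]

lemma exists_zeros_of_lt_two_mul_critConst (hA : 0 < A) (hB : 0 < B) (hC : 0 < C)
    (hq : 1 < q) (hCR : C < 2 * critConst A B q) :
    ∃ tp tm : ℝ, 0 < tp ∧ tp < tm ∧ tp ^ 2 < critSq A B q ∧ critSq A B q < tm ^ 2 ∧
      A * tp ^ 2 - B - C * tp ^ (q + 1) = 0 ∧ A * tm ^ 2 - B - C * tm ^ (q + 1) = 0 := by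
  set Φ : ℝ → ℝ := fun t => A * t ^ 2 - B - C * t ^ (q + 1) with hΦ
  have hcont : ∀ a b, ContinuousOn Φ (Icc a b) := fun _ _ =>
    (continuous_sub_sub_rpow (by linarith)).continuousOn
  have hs₀ := critSq_pos hA hB hq
  set T := √(critSq A B q)
  have hT : 0 < T := sqrt_pos.2 hs₀
  have hΦT : 0 < Φ T := sub_sub_rpow_sqrt_critSq_pos hA hB hq hCR
  have ht₁ : √(B / A) < T := sqrt_div_lt_of_pos hA hC.le hT hΦT
  have hΦt₁ : Φ √(B / A) ≤ 0 := by
    simp only [hΦ, sq_sqrt (div_pos hB hA).le, mul_div_cancel₀ B hA.ne']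
    have := rpow_nonneg (sqrt_nonneg (B / A)) (q + 1)
    nlinarith
  have ht₂ : T < (A / C) ^ (q - 1)⁻¹ := lt_rpow_inv_of_pos hB.le hC hq hT hΦT
  have hΦt₂ : Φ ((A / C) ^ (q - 1)⁻¹) ≤ 0 := by
    have ht₂pos : 0 < (A / C) ^ (q - 1)⁻¹ := by positivity
    simp only [hΦ, rpow_add_one_eq_rpow_sub_one_mul_sq ht₂pos,
      rpow_inv_rpow (div_pos hA hC).le (by linarith : q - 1 ≠ 0), ← mul_assoc,
      mul_div_cancel₀ A hC.ne', sub_sub_cancel_left]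
    linarith
  obtain ⟨tp, ⟨htp₁, htpT⟩, hΦtp⟩ := intermediate_value_Ico ht₁.le (hcont _ _) ⟨hΦt₁, hΦT⟩
  obtain ⟨tm, ⟨hTtm, -⟩, hΦtm⟩ := intermediate_value_Ioc' ht₂.le (hcont _ _) ⟨hΦt₂, hΦT⟩
  have htp : 0 < tp := (sqrt_pos.2 (div_pos hB hA)).trans_le htp₁
  exact ⟨tp, tm, htp, htpT.trans hTtm, (lt_sqrt htp.le).1 htpT,
    (sqrt_lt' (hT.trans hTtm)).1 hTtm, hΦtp, hΦtm⟩

lemma strictAntiOn_add_rpow (hA : 0 < A) (hB : 0 < B) (hq : 1 < q) :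
    StrictAntiOn (fun t : ℝ => A * t ^ (1 - q) + B * t ^ (-1 - q)) (Ioi 0) :=
  fun _ hx _ _ hxy => add_lt_add
    (mul_lt_mul_of_pos_left (rpow_lt_rpow_of_neg hx hxy (by linarith)) hA)
    (mul_lt_mul_of_pos_left (rpow_lt_rpow_of_neg hx hxy (by linarith)) hB)

lemma exists_sign_change (hA : 0 < A) (hB : 0 < B) (hq : 1 < q) {tp tm : ℝ}
    (htp : 0 < tp) (hlt : tp < tm) (hgp : 0 < A * tp ^ 2 + B - C * q * tp ^ (q + 1))
    (hgm : A * tm ^ 2 + B - C * q * tm ^ (q + 1) < 0) :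
    ∃ tb, tp < tb ∧ tb < tm ∧
      (∀ t : ℝ, 0 < t → t < tb → 0 < A * t ^ 2 + B - C * q * t ^ (q + 1)) ∧
      (∀ t : ℝ, tb < t → A * t ^ 2 + B - C * q * t ^ (q + 1) < 0) := by
  set k : ℝ → ℝ := fun t => A * t ^ (1 - q) + B * t ^ (-1 - q)
  have hanti : StrictAntiOn k (Ioi 0) := strictAntiOn_add_rpow hA hB hq
  have htm : 0 < tm := htp.trans hlt
  rw [add_sub_mul_rpow_eq_rpow_mul htp] at hgp
  rw [add_sub_mul_rpow_eq_rpow_mul htm] at hgm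
  have hkp : C * q < k tp := sub_pos.1 (pos_of_mul_pos_right hgp (rpow_nonneg htp.le _))
  have hkm : k tm < C * q := sub_neg.1 (neg_of_mul_neg_right hgm (rpow_nonneg htm.le _))
  have hcont : ContinuousOn k (Icc tp tm) := fun x hx => by
    have hx₀ : x ≠ 0 := (htp.trans_le hx.1).ne'
    exact ContinuousAt.continuousWithinAt (by fun_prop (disch := exact Or.inl hx₀))
  obtain ⟨tb, ⟨htpb, htbm⟩, hktb⟩ := intermediate_value_Ioo' hlt.le hcont ⟨hkm, hkp⟩
  have htb : 0 < tb := htp.trans htpb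
  refine ⟨tb, htpb, htbm, fun t ht htb' => ?_, fun t htb' => ?_⟩
  · rw [add_sub_mul_rpow_eq_rpow_mul ht]
    have := hanti ht htb htb'
    exact mul_pos (rpow_pos_of_pos ht _) (by linarith)
  · have ht := htb.trans htb'
    rw [add_sub_mul_rpow_eq_rpow_mul ht]
    have := hanti htb ht htb'
    exact mul_neg_of_pos_of_neg (rpow_pos_of_pos ht _) (by linarith)

/-- Characterization of the two-zero structure of `f(t) = At − B/t − Ct^q` and the sign
change of `g(t) = At² + B − Cq t^{q+1}` in terms of the inequality
`((q−1)^{(q−1)/2}/(q+1)^{(q+1)/2})·A^{(q+1)/2}/B^{(q−1)/2} > C/2`. -/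
theorem stmt14 (A B C q : ℝ) (hA : 0 < A) (hB : 0 < B) (hC : 0 < C) (hq : 1 < q) :
    (∃ tp tb tm : ℝ, 0 < tp ∧ tp < tb ∧ tb < tm ∧
      A * tp - B / tp - C * tp ^ q = 0 ∧
      A * tm - B / tm - C * tm ^ q = 0 ∧
      0 < deriv (fun t : ℝ => A * t - B / t - C * t ^ q) tp ∧
      deriv (fun t : ℝ => A * t - B / t - C * t ^ q) tm < 0 ∧
      (∀ t : ℝ, 0 < t → t < tb → 0 < A * t ^ 2 + B - C * q * t ^ (q + 1)) ∧
      (∀ t : ℝ, tb < t → A * t ^ 2 + B - C * q * t ^ (q + 1) < 0)) ↔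
    C / 2 < (q - 1) ^ ((q - 1) / 2) / (q + 1) ^ ((q + 1) / 2) *
      (A ^ ((q + 1) / 2) / B ^ ((q - 1) / 2)) := by
  change _ ↔ C / 2 < critConst A B q
  constructor
  · rintro ⟨tp, -, -, htp, -, -, hfp, -, hdp, -⟩
    rw [(hasDerivAt_sub_div_sub_rpow htp).deriv,
      div_pos_iff_of_pos_right (by positivity)] at hdp
    have := lt_two_mul_critConst_of_eq_zero hA hB hq htp
      ((sub_div_sub_rpow_eq_zero_iff htp).1 hfp) hdp
    linarith
  · intro hCR
    obtain ⟨tp, tm, htp, hlt, htp₂, htm₂, hzp, hzm⟩ :=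
      exists_zeros_of_lt_two_mul_critConst hA hB hC hq (by linarith)
    have htm : 0 < tm := htp.trans hlt
    have hAq : 0 < (q - 1) * A := mul_pos (by linarith) hA
    have hgp := add_sub_mul_rpow_eq_of_eq_zero hA hq hzp ▸ mul_pos hAq (sub_pos.2 htp₂)
    have hgm :=
      add_sub_mul_rpow_eq_of_eq_zero hA hq hzm ▸ mul_neg_of_pos_of_neg hAq (sub_neg.2 htm₂)
    obtain ⟨tb, htpb, htbm, hpos, hneg⟩ := exists_sign_change hA hB hq htp hlt hgp hgm
    refine ⟨tp, tb, tm, htp, htpb, htbm, (sub_div_sub_rpow_eq_zero_iff htp).2 hzp,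
      (sub_div_sub_rpow_eq_zero_iff htm).2 hzm, ?_, ?_, hpos, hneg⟩
    · rw [(hasDerivAt_sub_div_sub_rpow htp).deriv]
      exact div_pos hgp (by positivity)
    · rw [(hasDerivAt_sub_div_sub_rpow htm).deriv]
      exact div_neg_of_neg_of_pos hgm (by positivity)
end
end

section
/- Let t > 0 and let f : ℝ² → [0,∞) be integrable such that the function (x,y) ↦ log|x−y| · f(x) f(y) (interpreted as 0 on the diagonal {x = y}) is integrable on ℝ²×ℝ². Define f_t : ℝ² → [0,∞) by f_t(x) = t² f(t x). Then (x,y) ↦ log|x−y| · f_t(x) f_t(y) is integrable on ℝ²×ℝ², and ∬_{ℝ²×ℝ²} log|x−y| f_t(x) f_t(y) dx dy = ∬_{ℝ²×ℝ²} log|x−y| f(x) f(y) dx dy − ( ∫_{ℝ²} f dx )² · log t. -/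
open MeasureTheory

/-!
Off the diagonal `log ‖t • x - t • y‖ = log t + log ‖x - y‖`, and the diagonal is null, so the
dilated integrand `log ‖x - y‖ f_t(x) f_t(y)` is, almost everywhere, the `t`-dilate (with the
Jacobian factor `t ^ (2 d)`) of `log ‖x - y‖ f(x) f(y) - log t · f(x) f(y)`. Dilation preserves
integrability and, after the Jacobian, the integral; the correction term integrates to
`log t · (∫ f)²` by Fubini.
-/

open MeasureTheory Module Real

theorem MeasureTheory.Measure.ae_fst_ne_snd {α : Type*} [MeasurableSpace α] [MeasurableEq α]
    (μ ν : Measure α) [SFinite ν] [NullSingletonClass ν] : ∀ᵐ z ∂μ.prod ν, z.1 ≠ z.2 :=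
  (Measure.ae_prod_iff_ae_ae (measurableSet_diagonal.compl)).2 <|
    Filter.Eventually.of_forall fun x => (ν.ae_ne x).mono fun _ h => Ne.symm h

theorem Real.log_norm_smul_sub_smul {E : Type*} [NormedAddCommGroup E] [NormedSpace ℝ E]
    {t : ℝ} (ht : 0 < t) {x y : E} (hxy : x ≠ y) :
    log ‖t • x - t • y‖ = log t + log ‖x - y‖ := by
  rw [← smul_sub, norm_smul, norm_of_nonneg ht.le,
    log_mul ht.ne' (norm_ne_zero_iff.2 (sub_ne_zero.2 hxy))]

section Dilation

variable {F : Type*} [NormedAddCommGroup F] [NormedSpace ℝ F] [FiniteDimensional ℝ F]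
  [MeasurableSpace F] [BorelSpace F] {ν : Measure F} [ν.IsAddHaarMeasure] {t : ℝ}

theorem MeasureTheory.Integrable.pow_finrank_mul_comp_smul {h : F → ℝ} (hh : Integrable h ν)
    (ht : t ≠ 0) :
    Integrable (fun x => t ^ finrank ℝ F * h (t • x)) ν :=
  (hh.comp_smul ht).const_mul _

theorem MeasureTheory.integral_pow_finrank_mul_comp_smul (h : F → ℝ) (ht : 0 < t) :
    ∫ x, t ^ finrank ℝ F * h (t • x) ∂ν = ∫ x, h x ∂ν := by
  rw [integral_const_mul, Measure.integral_comp_smul_of_nonneg ν h t (hR := ht.le), smul_eq_mul,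
    mul_inv_cancel_left₀ (pow_ne_zero _ ht.ne')]

end Dilation

section LogEnergy

variable {E : Type*} [NormedAddCommGroup E] [NormedSpace ℝ E] [FiniteDimensional ℝ E]
  [Nontrivial E] [MeasurableSpace E] [BorelSpace E] {μ : Measure E} [μ.IsAddHaarMeasure] {t : ℝ}

theorem logEnergy_dilate_ae_eq (f : E → ℝ) (ht : 0 < t) :
    (fun z : E × E => log ‖z.1 - z.2‖ * (t ^ finrank ℝ E * f (t • z.1)) *
        (t ^ finrank ℝ E * f (t • z.2))) =ᵐ[μ.prod μ]
      fun z => t ^ finrank ℝ (E × E) * (log ‖(t • z).1 - (t • z).2‖ * f (t • z).1 * f (t • z).2 -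
        log t * (f (t • z).1 * f (t • z).2)) := by
  filter_upwards [μ.ae_fst_ne_snd μ] with z hz
  simp only [Prod.smul_fst, Prod.smul_snd, log_norm_smul_sub_smul ht hz, finrank_prod]
  ring

theorem integrable_logEnergy_dilate_and_integral_eq {f : E → ℝ} (hf : Integrable f μ)
    (hlog : Integrable (fun z : E × E => log ‖z.1 - z.2‖ * f z.1 * f z.2) (μ.prod μ))
    (ht : 0 < t) :
    Integrable (fun z : E × E => log ‖z.1 - z.2‖ * (t ^ finrank ℝ E * f (t • z.1)) *
        (t ^ finrank ℝ E * f (t • z.2))) (μ.prod μ) ∧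
    ∫ z, log ‖z.1 - z.2‖ * (t ^ finrank ℝ E * f (t • z.1)) * (t ^ finrank ℝ E * f (t • z.2))
        ∂μ.prod μ =
      (∫ z, log ‖z.1 - z.2‖ * f z.1 * f z.2 ∂μ.prod μ) - (∫ x, f x ∂μ) ^ 2 * log t := by
  have hff : Integrable (fun z : E × E => f z.1 * f z.2) (μ.prod μ) := hf.mul_prod hf
  have hcorr : Integrable
      (fun z : E × E => log ‖z.1 - z.2‖ * f z.1 * f z.2 - log t * (f z.1 * f z.2)) (μ.prod μ) :=
    hlog.sub (hff.const_mul (log t))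
  refine ⟨(hcorr.pow_finrank_mul_comp_smul ht.ne').congr (logEnergy_dilate_ae_eq f ht).symm, ?_⟩
  rw [integral_congr_ae (logEnergy_dilate_ae_eq f ht)]
  refine (integral_pow_finrank_mul_comp_smul (ν := μ.prod μ)
    (fun w : E × E => log ‖w.1 - w.2‖ * f w.1 * f w.2 - log t * (f w.1 * f w.2)) ht).trans ?_
  rw [integral_sub hlog (hff.const_mul _), integral_const_mul, integral_prod_mul]
  ring

end LogEnergy

theorem stmt17_general (t : ℝ) (ht : 0 < t) (f : Plane → ℝ)
    (hfint : Integrable f)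
    (hlog : Integrable (fun z : Plane × Plane => Real.log ‖z.1 - z.2‖ * f z.1 * f z.2)) :
    Integrable (fun z : Plane × Plane =>
      Real.log ‖z.1 - z.2‖ * (t ^ 2 * f (t • z.1)) * (t ^ 2 * f (t • z.2))) ∧
    (∫ z : Plane × Plane,
        Real.log ‖z.1 - z.2‖ * (t ^ 2 * f (t • z.1)) * (t ^ 2 * f (t • z.2))) =
      (∫ z : Plane × Plane, Real.log ‖z.1 - z.2‖ * f z.1 * f z.2) -
        (∫ x, f x) ^ 2 * Real.log t := by
  rw [Measure.volume_eq_prod] at hlog ⊢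
  simpa only [finrank_euclideanSpace_fin] using
    integrable_logEnergy_dilate_and_integral_eq hfint hlog ht

/-- Scaling of the logarithmic interaction: for `f_t(x) = t² f(tx)`,
`∬ log|x−y| f_t(x) f_t(y) = ∬ log|x−y| f(x) f(y) − (∫ f)² log t`.
(In Lean, `Real.log 0 = 0`, so the integrand is interpreted as `0` on the diagonal.) -/
theorem stmt17 (t : ℝ) (ht : 0 < t) (f : Plane → ℝ) (hf0 : ∀ x, 0 ≤ f x)
    (hfint : Integrable f)
    (hlog : Integrable (fun z : Plane × Plane => Real.log ‖z.1 - z.2‖ * f z.1 * f z.2)) :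
    Integrable (fun z : Plane × Plane =>
      Real.log ‖z.1 - z.2‖ * (t ^ 2 * f (t • z.1)) * (t ^ 2 * f (t • z.2))) ∧
    (∫ z : Plane × Plane,
        Real.log ‖z.1 - z.2‖ * (t ^ 2 * f (t • z.1)) * (t ^ 2 * f (t • z.2))) =
      (∫ z : Plane × Plane, Real.log ‖z.1 - z.2‖ * f z.1 * f z.2) -
        (∫ x, f x) ^ 2 * Real.log t :=
  stmt17_general t ht f hfint hlog
end

section
/- Let f : ℝ² → ℝ be integrable and define g : ℝ²×ℝ² → ℝ by g(x,y) = ((|x|² − ⟨x,y⟩)/|x−y|²) · f(x) f(y) for x ≠ y and g(x,x) = 0, where ⟨·,·⟩ is the Euclidean inner product on ℝ². If g is integrable on ℝ²×ℝ², then ∬_{ℝ²×ℝ²} g(x,y) dx dy = (1/2) ( ∫_{ℝ²} f dx )². -/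
open MeasureTheory

noncomputable section

/-!
The kernel `k(x, y) = (‖x‖² - ⟪x, y⟫) / ‖x - y‖²` satisfies `k(x, y) + k(y, x) = 1`
off the diagonal, because the two numerators add up to `‖x - y‖²`. The diagonal is null, so
`g(x, y) + g(y, x) = f(x) f(y)` almost everywhere; integrating and using that the integral of
`g` is invariant under swapping the variables gives `2 ∫ g = (∫ f)²`.
-/

section Symmetrization

variable {α : Type*} [MeasurableSpace α] {μ ν : Measure α}

theorem Measure.prod_diagonal_eq_zero [MeasurableEq α] [SFinite ν] [NullSingletonClass ν] :
    μ.prod ν (Set.diagonal α) = 0 := by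
  rw [Measure.measure_prod_null measurableSet_diagonal]
  filter_upwards with x
  have hfiber : Prod.mk x ⁻¹' Set.diagonal α = {x} := by ext; simp [eq_comm]
  simp [hfiber]

theorem ae_prod_fst_ne_snd [MeasurableEq α] [SFinite ν] [NullSingletonClass ν] :
    ∀ᵐ z ∂μ.prod ν, z.1 ≠ z.2 :=
  measure_eq_zero_iff_ae_notMem.mp Measure.prod_diagonal_eq_zero

theorem integral_eq_half_of_add_swap_ae_eq [SFinite μ] {g h : α × α → ℝ}
    (hg : Integrable g (μ.prod μ)) (hsum : ∀ᵐ z ∂μ.prod μ, g z + g z.swap = h z) :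
    ∫ z, g z ∂μ.prod μ = 1 / 2 * ∫ z, h z ∂μ.prod μ := by
  have hswap : ∫ z, g z.swap ∂μ.prod μ = ∫ z, g z ∂μ.prod μ := integral_prod_swap g
  have hg_swap : Integrable (fun z ↦ g z.swap) (μ.prod μ) := hg.swap
  rw [← integral_congr_ae hsum, integral_add hg hg_swap, hswap]
  ring

end Symmetrization

theorem norm_sq_sub_inner_div_add_swap_eq_one {E : Type*} [NormedAddCommGroup E]
    [InnerProductSpace ℝ E] {x y : E} (hxy : x ≠ y) :
    (‖x‖ ^ 2 - inner ℝ x y) / ‖x - y‖ ^ 2 + (‖y‖ ^ 2 - inner ℝ y x) / ‖y - x‖ ^ 2 = 1 := by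
  have hpos : ‖x - y‖ ^ 2 ≠ 0 := by simpa [sub_eq_zero] using hxy
  rw [norm_sub_rev y x, real_inner_comm x y, ← add_div, div_eq_one_iff_eq hpos,
    norm_sub_sq_real]
  ring

theorem stmt18_general (f : Plane → ℝ) (g : Plane × Plane → ℝ)
    (hg : ∀ x y : Plane, x ≠ y →
      g (x, y) = (‖x‖ ^ 2 - (inner ℝ x y : ℝ)) / ‖x - y‖ ^ 2 * f x * f y)
    (hgint : Integrable g) :
    (∫ z : Plane × Plane, g z) = (1 / 2) * (∫ x, f x) ^ 2 := by
  rw [Measure.volume_eq_prod] at hgint ⊢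
  have hsum : ∀ᵐ z ∂(volume : Measure Plane).prod volume, g z + g z.swap = f z.1 * f z.2 := by
    filter_upwards [ae_prod_fst_ne_snd] with ⟨x, y⟩ hxy
    rw [Prod.swap_prod_mk, hg x y hxy, hg y x hxy.symm]
    linear_combination f x * f y * norm_sq_sub_inner_div_add_swap_eq_one hxy
  rw [integral_eq_half_of_add_swap_ae_eq hgint hsum, integral_prod_mul, sq]

/-- `∬ ((|x|² − ⟨x,y⟩)/|x−y|²) f(x) f(y) dx dy = (1/2)(∫ f)²` by symmetrization. -/
theorem stmt18 (f : Plane → ℝ) (hf : Integrable f) (g : Plane × Plane → ℝ)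
    (hg : ∀ x y : Plane, x ≠ y →
      g (x, y) = (‖x‖ ^ 2 - (inner ℝ x y : ℝ)) / ‖x - y‖ ^ 2 * f x * f y)
    (hgdiag : ∀ x : Plane, g (x, x) = 0)
    (hgint : Integrable g) :
    (∫ z : Plane × Plane, g z) = (1 / 2) * (∫ x, f x) ^ 2 :=
  stmt18_general f g hg hgint
end
end
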